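/- Let A be a nonempty finite index set, let (mᵢ)_{i∈A} be nonzero Gaussian integers, and let L be a least common multiple of the mᵢ in ℤ[i]. Let s be a Gaussian integer with 4·N(s) < N(L), and for each i ∈ A let sᵢ be the unique remainder of s modulo mᵢ lying in 𝓕(mᵢ). Then any Gaussian integer x satisfying x ≡ sᵢ (mod mᵢ) for all i ∈ A satisfies x ≡ s (mod L), and the unique remainder of x modulo L lying in 𝓕(L) equals s. -/

import Mathlib

/-- The fundamental domain `𝓕(z)` of a Gaussian integer `z`:
the semi-open square `{ z(α + βi) : -1/2 < α ≤ 1/2, -1/2 < β ≤ 1/2 }` in `ℂ`. -/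
def Fd (z : GaussianInt) : Set ℂ :=
  { w | ∃ α β : ℝ, w = (GaussianInt.toComplex z) * (α + β * Complex.I) ∧
      -(1/2 : ℝ) < α ∧ α ≤ 1/2 ∧ -(1/2 : ℝ) < β ∧ β ≤ 1/2 }

/-! The secret `s` lies in the open disc of radius `|L|/2`, hence inside `𝓕(L)`; every solution
`x` is congruent to `s` modulo `L` because `L` is a least common multiple; and two points of
`𝓕(L)` congruent modulo `L` coincide, since their difference divided by `L` is a Gaussian
integer whose coordinates lie in `(-1, 1)`. -/

open GaussianInt

theorem mem_Fd_iff {z : GaussianInt} (hz : z ≠ 0) {w : ℂ} :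
    w ∈ Fd z ↔ -(1/2 : ℝ) < (w / z).re ∧ (w / z).re ≤ 1/2 ∧
      -(1/2 : ℝ) < (w / z).im ∧ (w / z).im ≤ 1/2 := by
  have hz' : (z : ℂ) ≠ 0 := toComplex_eq_zero.not.mpr hz
  constructor
  · rintro ⟨α, β, rfl, hα⟩
    simpa [mul_div_cancel_left₀ _ hz'] using hα
  · intro h
    exact ⟨(w / z).re, (w / z).im, by rw [Complex.re_add_im, mul_div_cancel₀ _ hz'], h⟩

theorem GaussianInt.eq_zero_of_abs_re_lt_one_of_abs_im_lt_one {q : GaussianInt}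
    (hre : |(q : ℂ).re| < 1) (him : |(q : ℂ).im| < 1) : q = 0 := by
  rw [← intCast_re] at hre
  rw [← intCast_im] at him
  ext
  · exact Int.abs_lt_one_iff.mp (by exact_mod_cast hre)
  · exact Int.abs_lt_one_iff.mp (by exact_mod_cast him)

theorem eq_of_mem_Fd_of_dvd_sub {L r r' : GaussianInt} (hr : (r : ℂ) ∈ Fd L)
    (hr' : (r' : ℂ) ∈ Fd L) (h : L ∣ r - r') : r = r' := by
  rcases eq_or_ne L 0 with rfl | hL
  · exact sub_eq_zero.mp (zero_dvd_iff.mp h)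
  obtain ⟨q, hq⟩ := h
  have hL' : (L : ℂ) ≠ 0 := toComplex_eq_zero.not.mpr hL
  have hquot : (q : ℂ) = r / L - r' / L := by
    rw [← sub_div, ← toComplex_sub, hq, toComplex_mul, mul_div_cancel_left₀ _ hL']
  rw [mem_Fd_iff hL] at hr hr'
  have hq0 : q = 0 := by
    apply eq_zero_of_abs_re_lt_one_of_abs_im_lt_one <;>
      rw [hquot, abs_lt] <;> simp only [Complex.sub_re, Complex.sub_im] <;>
      constructor <;> linarith
  rwa [hq0, mul_zero, sub_eq_zero] at hq

theorem mem_Fd_of_four_mul_norm_lt {s L : GaussianInt} (hs : 4 * s.norm < L.norm) :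
    (s : ℂ) ∈ Fd L := by
  have hL : L ≠ 0 := norm_pos.mp (by linarith [s.norm_nonneg])
  have hnorm : ‖(s : ℂ) / L‖ < 1/2 := by
    have hNL : (0 : ℝ) < L.norm := by exact_mod_cast norm_pos.mpr hL
    have hsq : ‖(s : ℂ) / L‖ ^ 2 < (1/2) ^ 2 := by
      rw [← Complex.normSq_eq_norm_sq, Complex.normSq_div, ← intCast_real_norm,
        ← intCast_real_norm, div_lt_iff₀ hNL]
      have : (4 : ℝ) * s.norm < L.norm := by exact_mod_cast hs
      linarith
    exact abs_lt_of_sq_lt_sq' hsq (by norm_num) |>.2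
  have hre := abs_lt.mp ((Complex.abs_re_le_norm _).trans_lt hnorm)
  have him := abs_lt.mp ((Complex.abs_im_le_norm _).trans_lt hnorm)
  exact (mem_Fd_iff hL).mpr ⟨hre.1, hre.2.le, him.1, him.2.le⟩

theorem reconstruction_correct_general {ι : Type*} (A : Finset ι)
    (m : ι → GaussianInt) (L : GaussianInt)
    (hL₂ : ∀ K : GaussianInt, (∀ i ∈ A, m i ∣ K) → L ∣ K)
    (s : GaussianInt) (hs : 4 * s.norm < L.norm)
    (sh : ι → GaussianInt)
    (hsh : ∀ i ∈ A, GaussianInt.toComplex (sh i) ∈ Fd (m i) ∧ m i ∣ s - sh i)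
    (x : GaussianInt) (hx : ∀ i ∈ A, m i ∣ x - sh i) :
    L ∣ x - s ∧
      ∀ r : GaussianInt, GaussianInt.toComplex r ∈ Fd L → L ∣ x - r → r = s := by
  have hxs : L ∣ x - s :=
    hL₂ _ fun i hi => by simpa using dvd_sub (hx i hi) (hsh i hi).2
  refine ⟨hxs, fun r hr hxr => eq_of_mem_Fd_of_dvd_sub hr (mem_Fd_of_four_mul_norm_lt hs) ?_⟩
  simpa using dvd_sub hxs hxr

/-- Correctness of secret reconstruction: if `L` is a least common multiple of the
nonzero moduli `m i` (`i ∈ A`, `A` nonempty), `4 * N(s) < N(L)`, and each `sh i` is the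
remainder of the secret `s` modulo `m i` lying in `𝓕(m i)`, then every solution `x` of
the congruence system `x ≡ sh i (mod m i)` satisfies `x ≡ s (mod L)`, and the remainder
of `x` modulo `L` lying in `𝓕(L)` equals `s`. -/
theorem reconstruction_correct {ι : Type*} (A : Finset ι) (hA : A.Nonempty)
    (m : ι → GaussianInt) (hm : ∀ i ∈ A, m i ≠ 0) (L : GaussianInt)
    (hL₁ : ∀ i ∈ A, m i ∣ L) (hL₂ : ∀ K : GaussianInt, (∀ i ∈ A, m i ∣ K) → L ∣ K)
    (s : GaussianInt) (hs : 4 * s.norm < L.norm)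
    (sh : ι → GaussianInt)
    (hsh : ∀ i ∈ A, GaussianInt.toComplex (sh i) ∈ Fd (m i) ∧ m i ∣ s - sh i)
    (x : GaussianInt) (hx : ∀ i ∈ A, m i ∣ x - sh i) :
    L ∣ x - s ∧
      ∀ r : GaussianInt, GaussianInt.toComplex r ∈ Fd L → L ∣ x - r → r = s :=
  reconstruction_correct_general A m L hL₂ s hs sh hsh x hx
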